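/- Assume p ≡ 1 (mod 4). Then the map z ↦ −1/z belongs to G. -/

import Mathlib

instance (X : Type*) [DecidableEq X] : DecidableEq (OnePoint X) :=
  inferInstanceAs (DecidableEq (Option X))

/-- The translation `z ↦ z + a` on `ℤ/p ∪ {∞}`, fixing `∞`. -/
def ptrans (p : ℕ) (a : ZMod p) : Equiv.Perm (OnePoint (ZMod p)) :=
  Equiv.optionCongr (Equiv.addRight a)

/-- The map `z ↦ a z` on `ℤ/p ∪ {∞}`, fixing `∞`, for `a ≠ 0`. -/
def pmul (p : ℕ) [Fact p.Prime] (a : ZMod p) (ha : a ≠ 0) : Equiv.Perm (OnePoint (ZMod p)) :=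
  Equiv.optionCongr (Equiv.mulLeft₀ a ha)

/-- Multiplication by `a` extended to `ℤ/p ∪ {∞}` (with `a·∞ = ∞`). -/
def opSmul (p : ℕ) (a : ZMod p) : OnePoint (ZMod p) → OnePoint (ZMod p) :=
  fun x => Option.map (fun z => a * z) x

/-- Underlying function of the map `z ↦ -1/z`. -/
def negInvFun (p : ℕ) : OnePoint (ZMod p) → OnePoint (ZMod p)
  | Option.none => Option.some (0 : ZMod p)
  | Option.some z => if z = 0 then Option.none else Option.some (-z⁻¹ : ZMod p)

/-- The permutation `z ↦ -1/z` of `ℤ/p ∪ {∞}` (sending `0 ↦ ∞` and `∞ ↦ 0`). -/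
def negInvPerm (p : ℕ) [Fact p.Prime] : Equiv.Perm (OnePoint (ZMod p)) :=
  Function.Involutive.toPerm (negInvFun p) (by
    intro x
    match x with
    | Option.none => simp [negInvFun] <;> rfl
    | Option.some z =>
      by_cases hz : z = 0
      · simp [negInvFun, hz] <;> rfl
      · have h1 : (-z⁻¹ : ZMod p) ≠ 0 := by simp [hz]
        simp [negInvFun, hz, h1, inv_neg, inv_inv] <;> rfl)

/-- The involution `(0 ∞)(1 3)(2 6)(4 5)`. -/
def inv1 (p : ℕ) : Equiv.Perm (OnePoint (ZMod p)) :=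
  Equiv.swap ((0 : ZMod p) : OnePoint (ZMod p)) OnePoint.infty *
  Equiv.swap ((1 : ZMod p) : OnePoint (ZMod p)) ((3 : ZMod p) : OnePoint (ZMod p)) *
  Equiv.swap ((2 : ZMod p) : OnePoint (ZMod p)) ((6 : ZMod p) : OnePoint (ZMod p)) *
  Equiv.swap ((4 : ZMod p) : OnePoint (ZMod p)) ((5 : ZMod p) : OnePoint (ZMod p))

/-- The involution `(0 ∞)(1 5)(2 3)(4 6)`. -/
def inv2 (p : ℕ) : Equiv.Perm (OnePoint (ZMod p)) :=
  Equiv.swap ((0 : ZMod p) : OnePoint (ZMod p)) OnePoint.infty *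
  Equiv.swap ((1 : ZMod p) : OnePoint (ZMod p)) ((5 : ZMod p) : OnePoint (ZMod p)) *
  Equiv.swap ((2 : ZMod p) : OnePoint (ZMod p)) ((3 : ZMod p) : OnePoint (ZMod p)) *
  Equiv.swap ((4 : ZMod p) : OnePoint (ZMod p)) ((6 : ZMod p) : OnePoint (ZMod p))

/-- The set of nonzero squares in `ℤ/p`. -/
def Rset (p : ℕ) : Set (ZMod p) := {a | a ≠ 0 ∧ IsSquare a}

/-- The set of nonsquares in `(ℤ/p)*`. -/
def Nset (p : ℕ) : Set (ZMod p) := {a | a ≠ 0 ∧ ¬ IsSquare a}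

/-!
The stabilizer of `∞` in `G` has order `p (p - 1) / 2`, so the translations form its unique Sylow
`p`-subgroup. Being normalized by the whole stabilizer forces every element of `G` fixing `∞` to be
affine, `z ↦ c z + d`. Since `p ≡ 1 [MOD 4]` the stabilizer has even order; an affine involution
is `z ↦ -z + d`, hence `z ↦ -z` lies in `G`.

Now take `w ∈ G` swapping `0` and `∞` and write `w z = f z` for `z ≠ 0`. Conjugating `z ↦ -z` by
`w` gives a nontrivial affine involution fixing `0`, i.e. `z ↦ -z` again, so `f` is odd. For
`a ≠ 0` the element `w⁻¹ (z ↦ z - f a) w (z ↦ z + a) w⁻¹` of `G` fixes `∞`; writing it as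
`z ↦ γ z + δ` gives `δ = -a`, `γ f a = -a` and `f (γ (f z + f a)) = f (z + a) - f a`. Induction
on `n` then yields `n f (n a) = f a`, i.e. `f z = f 1 / z`, so `z ↦ -1/z` is `w` followed by the
dilation by `γ = -1 / f 1`, which lies in `G`.
-/

open Equiv MulAction OnePoint

theorem conj_mem_zpowers_of_card_eq_prime_mul {H : Type*} [Group H] [Finite H]
    {p k : ℕ} [Fact p.Prime] (hk : k < p) (hH : Nat.card H = p * k) {a : H}
    (ha : orderOf a = p) (g : H) : g * a * g⁻¹ ∈ Subgroup.zpowers a := by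
  have hp : p.Prime := Fact.out
  have hk0 : 0 < k := Nat.pos_of_ne_zero fun hk0 =>
    Nat.card_pos.ne' (hH.trans (by rw [hk0, mul_zero]))
  have hfac : (Nat.card H).factorization p = 1 := by
    rw [hH, Nat.factorization_mul hp.ne_zero hk0.ne', Finsupp.add_apply, hp.factorization_self,
      Nat.factorization_eq_zero_of_not_dvd fun h => (Nat.le_of_dvd hk0 h).not_gt hk]
  let P : Sylow p H :=
    Sylow.ofCard (Subgroup.zpowers a) (by rw [Nat.card_zpowers, ha, hfac, pow_one])
  have hindex : (P : Subgroup H).index = k := by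
    have := (P : Subgroup H).index_mul_card
    rw [Sylow.coe_ofCard, Nat.card_zpowers, ha, hH, mul_comm p] at this
    exact Nat.eq_of_mul_eq_mul_right hp.pos this
  have hunique : Nat.card (Sylow p H) = 1 := by
    have hlt : Nat.card (Sylow p H) < p :=
      (Nat.le_of_dvd hk0 (hindex ▸ P.card_dvd_index)).trans_lt hk
    have hmod := card_sylow_modEq_one p H
    rwa [Nat.ModEq, Nat.mod_eq_of_lt hlt, Nat.mod_eq_of_lt hp.one_lt] at hmod
  have : Subsingleton (Sylow p H) := (Nat.card_eq_one_iff_unique.mp hunique).1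
  exact P.normal_of_subsingleton.conj_mem a (Subgroup.mem_zpowers a) g

theorem OnePoint.exists_apply_coe_eq_coe {X : Type*} {w : Perm (OnePoint X)} {x₀ : X}
    (hw : w x₀ = ∞) : ∃ f : X → X, ∀ x : X, x ≠ x₀ → w x = f x := by
  have (x : X) : ∃ y : X, x ≠ x₀ → w x = y := by
    by_cases hx : x = x₀
    · exact ⟨x₀, fun h => absurd hx h⟩
    · obtain ⟨y, hy⟩ := ne_infty_iff_exists.mp fun h =>
        hx (coe_injective (w.injective (h.trans hw.symm)))
      exact ⟨y, fun _ => hy.symm⟩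
  choose f hf using this
  exact ⟨f, hf⟩

section Affine

variable {p : ℕ}

@[simp] theorem ptrans_coe (a z : ZMod p) : ptrans p a z = ↑(z + a) := rfl

@[simp] theorem ptrans_infty (a : ZMod p) : ptrans p a ∞ = ∞ := rfl

theorem ptrans_add (a b : ZMod p) : ptrans p (a + b) = ptrans p a * ptrans p b := by
  ext x
  induction x using OnePoint.rec <;> simp [add_assoc, add_comm b]

@[simp] theorem ptrans_zero : ptrans p 0 = 1 := by
  ext x
  induction x using OnePoint.rec <;> simp

theorem ptrans_one_pow (n : ℕ) : ptrans p 1 ^ n = ptrans p n := by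
  induction n with
  | zero => simp
  | succ n ih => rw [pow_succ, ih, ← ptrans_add, Nat.cast_succ]

variable [Fact p.Prime]

theorem orderOf_ptrans_one : orderOf (ptrans p 1) = p := by
  refine orderOf_eq_prime (by rw [ptrans_one_pow, ZMod.natCast_self, ptrans_zero]) fun h => ?_
  simpa using congr($h (0 : ZMod p))

@[simp] theorem pmul_coe (c : ZMod p) (hc : c ≠ 0) (z : ZMod p) : pmul p c hc z = ↑(c * z) :=
  rfl

@[simp] theorem pmul_infty (c : ZMod p) (hc : c ≠ 0) : pmul p c hc ∞ = ∞ := rfl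

@[simp] theorem negInvPerm_infty : negInvPerm p ∞ = (0 : ZMod p) := rfl

theorem negInvPerm_coe (z : ZMod p) : negInvPerm p z = if z = 0 then ∞ else ↑(-z⁻¹) := rfl

theorem exists_eq_ptrans_mul_pmul {g : Perm (OnePoint (ZMod p))} (hg : g ∞ = ∞) {c : ZMod p}
    (hgc : g * ptrans p 1 = ptrans p c * g) :
    ∃ (d : ZMod p) (hc : c ≠ 0), g = ptrans p d * pmul p c hc := by
  have hfin (z : ZMod p) : ∃ y : ZMod p, g z = y :=
    (ne_infty_iff_exists.mp fun h => coe_ne_infty z (g.injective (h.trans hg.symm))).imp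
      fun _ => Eq.symm
  choose u hu using hfin
  have hstep (z : ZMod p) : u (z + 1) = u z + c := by
    simpa [hu] using congr($hgc z)
  have hlin (z : ZMod p) : u z = u 0 + z * c := by
    obtain ⟨n, rfl⟩ := ZMod.natCast_zmod_surjective z
    induction n with
    | zero => simp
    | succ n ih => rw [Nat.cast_succ, hstep, ih]; ring
  have hc : c ≠ 0 := by
    rintro rfl
    have : g (1 : ZMod p) = g (0 : ZMod p) := by rw [hu, hu, hlin 1]; simp
    exact one_ne_zero (coe_injective (g.injective this))
  refine ⟨u 0, hc, ?_⟩
  ext x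
  induction x using OnePoint.rec
  · simpa using hg
  · rw [Perm.mul_apply, pmul_coe, ptrans_coe, hu, hlin, add_comm, mul_comm]

theorem eq_neg_one_of_ptrans_mul_pmul_sq_eq_one (hp2 : p ≠ 2) {c d : ZMod p} (hc : c ≠ 0)
    (hsq : (ptrans p d * pmul p c hc) ^ 2 = 1) (hne : ptrans p d * pmul p c hc ≠ 1) :
    c = -1 := by
  have h0 : c * d + d = 0 := by simpa [sq] using congr($hsq (0 : ZMod p))
  have h1 : c * (c + d) + d = 1 := by simpa [sq] using congr($hsq (1 : ZMod p))
  rcases mul_self_eq_one_iff.mp (by linear_combination h1 - h0 : c * c = 1) with rfl | rfl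
  · obtain rfl : d = 0 := by
      refine (mul_eq_zero.mp ?_).resolve_left (Ring.two_ne_zero (by rwa [ZMod.ringChar_zmod_n]))
      linear_combination h0
    refine absurd ?_ hne
    ext x
    induction x using OnePoint.rec <;> simp
  · rfl

theorem negInvPerm_eq_pmul_mul {w : Perm (OnePoint (ZMod p))}
    (hwinf : w ∞ = (0 : ZMod p)) (hw0 : w (0 : ZMod p) = ∞) {f : ZMod p → ZMod p}
    (hf : ∀ z : ZMod p, z ≠ 0 → w z = f z) {γ : ZMod p} (hγ : γ ≠ 0)
    (hγf : ∀ z ≠ 0, γ * f z = -z⁻¹) : negInvPerm p = pmul p γ hγ * w := by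
  ext x
  induction x using OnePoint.rec with
  | infty => simp [hwinf]
  | coe z =>
    rw [negInvPerm_coe, Perm.mul_apply]
    split_ifs with hz
    · rw [hz, hw0, pmul_infty]
    · rw [hf z hz, pmul_coe, hγf z hz]

theorem mul_apply_eq_apply_one {f : ZMod p → ZMod p} (hodd : ∀ z ≠ 0, f (-z) = -f z)
    (hfe : ∀ a ≠ 0, ∃ γ : ZMod p, γ * f a = -a ∧
      ∀ z ≠ 0, z + a ≠ 0 → f (γ * (f z + f a)) = f (z + a) - f a)
    {z : ZMod p} (hz : z ≠ 0) : z * f z = f 1 := by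
  have hcast {n : ℕ} (hn : 1 ≤ n) (hnp : n < p) : (n : ZMod p) ≠ 0 := by
    rw [Ne, ZMod.natCast_eq_zero_iff]
    exact fun h => (Nat.le_of_dvd hn h).not_gt hnp
  have key (n : ℕ) (hn : 1 ≤ n) : n < p → ∀ a ≠ 0, (n : ZMod p) * f (n * a) = f a := by
    induction n, hn using Nat.le_induction with
    | base => simp
    | succ n hn ih =>
      intro hnp a ha
      have hν := hcast hn (by omega)
      have hν1 := hcast (by omega) hnp
      push_cast at hν1 ⊢
      set ν : ZMod p := (n : ZMod p)
      obtain ⟨b, hνb⟩ : ∃ b, ν * b = (ν + 1) * a := ⟨_, mul_div_cancel₀ _ hν⟩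
      have hb : b ≠ 0 := by
        rintro rfl
        exact mul_ne_zero hν1 ha (by rw [← hνb, mul_zero])
      obtain ⟨γ, hγ, hfe⟩ := hfe a ha
      have h1 := hfe (ν * a) (mul_ne_zero hν ha)
        (by rw [show ν * a + a = (ν + 1) * a by ring]; exact mul_ne_zero hν1 ha)
      have h2 := ih (by omega) a ha
      have h3 := ih (by omega) b hb
      have hγb : γ * (f (ν * a) + f a) = -b :=
        mul_left_cancel₀ hν (by linear_combination γ * h2 + (ν + 1) * hγ + hνb)
      rw [hγb, hodd b hb, show ν * a + a = ν * b by rw [hνb]; ring] at h1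
      rw [← hνb]
      linear_combination h3 - h1
  simpa [ZMod.natCast_zmod_val] using
    key z.val (ZMod.val_pos.mpr hz) (ZMod.val_lt z) 1 one_ne_zero

end Affine

section Stabilizer

variable {p : ℕ} [Fact p.Prime] {G : Subgroup (Perm (OnePoint (ZMod p)))}

theorem card_stabilizer_infty (hp2 : p ≠ 2)
    (htrans : ∀ x y : OnePoint (ZMod p), ∃ g ∈ G, g x = y)
    (hcard : Nat.card G = (p ^ 3 - p) / 2) :
    Nat.card (stabilizer G (∞ : OnePoint (ZMod p))) = p * ((p - 1) / 2) := by
  have : IsPretransitive G (OnePoint (ZMod p)) := ⟨fun x y => by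
    obtain ⟨g, hg, hgy⟩ := htrans x y
    exact ⟨⟨g, hg⟩, hgy⟩⟩
  have h := (stabilizer G (∞ : OnePoint (ZMod p))).index_mul_card
  have hX : Nat.card (OnePoint (ZMod p)) = p + 1 :=
    (Finite.card_option (α := ZMod p)).trans (by rw [Nat.card_zmod])
  rw [index_stabilizer_of_transitive, hX, hcard] at h
  obtain ⟨k, rfl⟩ := (Fact.out : p.Prime).odd_of_ne_two hp2
  have horder : (2 * k + 1) ^ 3 - (2 * k + 1) = 2 * ((2 * k + 1 + 1) * ((2 * k + 1) * k)) :=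
    Nat.sub_eq_of_eq_add (by ring)
  rw [horder, Nat.mul_div_cancel_left _ two_pos] at h
  rw [show (2 * k + 1 - 1) / 2 = k by omega]
  exact Nat.eq_of_mul_eq_mul_left (Nat.succ_pos _) h

theorem exists_eq_ptrans_mul_pmul_of_mem (hp2 : p ≠ 2)
    (htrans : ∀ x y : OnePoint (ZMod p), ∃ g ∈ G, g x = y)
    (hcard : Nat.card G = (p ^ 3 - p) / 2) (htransl : ∀ a : ZMod p, ptrans p a ∈ G)
    {g : Perm (OnePoint (ZMod p))} (hg : g ∈ G) (hfix : g ∞ = ∞) :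
    ∃ (c d : ZMod p) (hc : c ≠ 0), g = ptrans p d * pmul p c hc := by
  let τ : stabilizer G (∞ : OnePoint (ZMod p)) := ⟨⟨ptrans p 1, htransl 1⟩, rfl⟩
  have hτ : orderOf τ = p := by
    rw [← Subgroup.orderOf_coe, ← Subgroup.orderOf_coe]
    exact orderOf_ptrans_one
  have hk : (p - 1) / 2 < p := by
    have := (Fact.out : p.Prime).pos
    omega
  obtain ⟨n, hn⟩ := mem_powers_iff_mem_zpowers.mpr <| conj_mem_zpowers_of_card_eq_prime_mul hk
    (card_stabilizer_infty hp2 htrans hcard) hτ ⟨⟨g, hg⟩, hfix⟩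
  have hconj : g * ptrans p 1 * g⁻¹ = ptrans p n := by
    rw [← ptrans_one_pow]
    exact congr((($hn : G) : Perm (OnePoint (ZMod p)))).symm
  obtain ⟨d, hc, rfl⟩ := exists_eq_ptrans_mul_pmul hfix (c := n) (by rw [← hconj]; group)
  exact ⟨_, d, hc, rfl⟩

theorem pmul_neg_one_mem (hp1 : p % 4 = 1)
    (htrans : ∀ x y : OnePoint (ZMod p), ∃ g ∈ G, g x = y)
    (hcard : Nat.card G = (p ^ 3 - p) / 2) (htransl : ∀ a : ZMod p, ptrans p a ∈ G) :
    pmul p (-1) (neg_ne_zero.mpr one_ne_zero) ∈ G := by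
  have hp2 : p ≠ 2 := by omega
  have h2 : 2 ∣ Nat.card (stabilizer G (∞ : OnePoint (ZMod p))) := by
    rw [card_stabilizer_infty hp2 htrans hcard]
    exact Dvd.dvd.mul_left (by omega) p
  obtain ⟨σ, hσ⟩ := exists_prime_orderOf_dvd_card' 2 h2
  obtain ⟨c, d, hc, hσcd⟩ :=
    exists_eq_ptrans_mul_pmul_of_mem hp2 htrans hcard htransl (σ : G).2 σ.2
  rw [← Subgroup.orderOf_coe, ← Subgroup.orderOf_coe, hσcd] at hσ
  obtain rfl := eq_neg_one_of_ptrans_mul_pmul_sq_eq_one hp2 hc (hσ ▸ pow_orderOf_eq_one _)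
    fun h => by simp [h] at hσ
  have : pmul p (-1) (neg_ne_zero.mpr one_ne_zero) = ptrans p (-d) * σ := by
    rw [hσcd, ← mul_assoc, ← ptrans_add, neg_add_cancel, ptrans_zero, one_mul]
  rw [this]
  exact G.mul_mem (htransl _) (σ : G).2

theorem exists_mem_swap_zero_infty (htrans : ∀ x y : OnePoint (ZMod p), ∃ g ∈ G, g x = y)
    (htransl : ∀ a : ZMod p, ptrans p a ∈ G) :
    ∃ w ∈ G, w ∞ = (0 : ZMod p) ∧ w (0 : ZMod p) = ∞ := by
  obtain ⟨w, hwG, hw⟩ := htrans ∞ (0 : ZMod p)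
  obtain ⟨a, ha⟩ := ne_infty_iff_exists.mp fun h : w⁻¹ ∞ = ∞ =>
    coe_ne_infty (0 : ZMod p) (hw.symm.trans (Perm.inv_eq_iff_eq.mp h).symm)
  exact ⟨w * ptrans p a, G.mul_mem hwG (htransl a), by simpa using hw, by simp [ha]⟩

theorem commute_pmul_neg_one_of_swap (hp2 : p ≠ 2)
    (haff : ∀ g ∈ G, g ∞ = ∞ → ∃ (c d : ZMod p) (hc : c ≠ 0), g = ptrans p d * pmul p c hc)
    (hμ : pmul p (-1) (neg_ne_zero.mpr one_ne_zero) ∈ G) {w : Perm (OnePoint (ZMod p))}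
    (hwG : w ∈ G) (hwinf : w ∞ = (0 : ZMod p)) (hw0 : w (0 : ZMod p) = ∞) :
    Commute w (pmul p (-1) (neg_ne_zero.mpr one_ne_zero)) := by
  set μ := pmul p (-1) (neg_ne_zero.mpr one_ne_zero)
  have hw0' : w⁻¹ ∞ = (0 : ZMod p) := Perm.inv_eq_iff_eq.mpr hw0.symm
  have hwinf' : w⁻¹ (0 : ZMod p) = ∞ := Perm.inv_eq_iff_eq.mpr hwinf.symm
  obtain ⟨c, d, hc, hcd⟩ := haff (w * μ * w⁻¹) (G.mul_mem (G.mul_mem hwG hμ) (G.inv_mem hwG))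
    (by rw [Perm.mul_apply, Perm.mul_apply, hw0', pmul_coe, mul_zero, hw0])
  obtain rfl : d = 0 := by
    have h0 := congr($hcd (0 : ZMod p))
    rwa [Perm.mul_apply, Perm.mul_apply, hwinf', pmul_infty, hwinf, Perm.mul_apply, pmul_coe,
      ptrans_coe, mul_zero, zero_add, coe_eq_coe, eq_comm] at h0
  have hμ2 : μ ^ 2 = 1 := by
    ext x
    induction x using OnePoint.rec <;> simp [μ, sq]
  have hμ1 : μ ≠ 1 := fun h => by
    simpa [μ, neg_one_eq_one_iff, ZMod.ringChar_zmod_n, hp2] using congr($h (1 : ZMod p))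
  obtain rfl := eq_neg_one_of_ptrans_mul_pmul_sq_eq_one hp2 hc
    (by rw [← hcd, conj_pow, hμ2, mul_one, mul_inv_cancel]) (by rwa [← hcd, Ne, conj_eq_one_iff])
  exact mul_inv_eq_iff_eq_mul.mp (by rw [hcd, ptrans_zero, one_mul])

theorem exists_slope_of_swap (htransl : ∀ a : ZMod p, ptrans p a ∈ G)
    (haff : ∀ g ∈ G, g ∞ = ∞ → ∃ (c d : ZMod p) (hc : c ≠ 0), g = ptrans p d * pmul p c hc)
    {w : Perm (OnePoint (ZMod p))} (hwG : w ∈ G) (hwinf : w ∞ = (0 : ZMod p))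
    (hw0 : w (0 : ZMod p) = ∞) {f : ZMod p → ZMod p} (hf : ∀ z : ZMod p, z ≠ 0 → w z = f z)
    (hodd : ∀ z ≠ 0, f (-z) = -f z) {a : ZMod p} (ha : a ≠ 0) :
    ∃ (γ : ZMod p) (hγ : γ ≠ 0), pmul p γ hγ ∈ G ∧ γ * f a = -a ∧
      ∀ z ≠ 0, z + a ≠ 0 → f (γ * (f z + f a)) = f (z + a) - f a := by
  have hf' {x y : ZMod p} (h : w x = y) : f x = y := by
    by_cases hx : x = 0
    · rw [hx, hw0] at h
      exact absurd h (infty_ne_coe y)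
    · exact coe_injective ((hf x hx).symm.trans h)
  set m := w⁻¹ * ptrans p (-f a) * w * ptrans p a * w⁻¹
  have hm (x : OnePoint (ZMod p)) : w (m (w x)) = ptrans p (-f a) (w (ptrans p a x)) := by
    simp [m]
  have hmG : m ∈ G := G.mul_mem (G.mul_mem (G.mul_mem (G.mul_mem (G.inv_mem hwG) (htransl _))
    hwG) (htransl _)) (G.inv_mem hwG)
  have hminf : m ∞ = ∞ := by
    have h := hm (0 : ZMod p)
    rwa [hw0, ptrans_coe, zero_add, hf a ha, ptrans_coe, add_neg_cancel, ← hwinf,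
      w.injective.eq_iff] at h
  obtain ⟨γ, δ, hγ, hmγ⟩ := haff m hmG hminf
  have hm_coe (y : ZMod p) : m y = ↑(γ * y + δ) := by simp [hmγ]
  have hδ : δ = -a := by
    have h := hm ∞
    rw [hwinf, hm_coe, ptrans_infty, hwinf, ptrans_coe, zero_add, mul_zero, zero_add,
      ← hodd a ha, ← hf (-a) (neg_ne_zero.mpr ha)] at h
    exact coe_injective (w.injective h)
  have hγa : γ * f a = -a := by
    have h := hm (-a : ZMod p)
    rw [hf (-a) (neg_ne_zero.mpr ha), hm_coe, ptrans_coe, neg_add_cancel, hw0, ptrans_infty,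
      ← hw0, w.injective.eq_iff, coe_eq_coe, hodd a ha, hδ] at h
    linear_combination -h
  refine ⟨γ, hγ, ?_, hγa, fun z hz hza => hf' ?_⟩
  · have : pmul p γ hγ = ptrans p (-δ) * m := by
      rw [hmγ, ← mul_assoc, ← ptrans_add, neg_add_cancel, ptrans_zero, one_mul]
    rw [this]
    exact G.mul_mem (htransl _) hmG
  · have h := hm z
    rwa [hf z hz, hm_coe, ptrans_coe, hf _ hza, ptrans_coe, ← sub_eq_add_neg, hδ,
      show γ * f z + -a = γ * (f z + f a) by linear_combination -hγa] at h

end Stabilizer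

theorem negInv_mem_of_one_mod_four_general
    (p : ℕ) [Fact p.Prime] (hp1 : p % 4 = 1)
    (G : Subgroup (Equiv.Perm (OnePoint (ZMod p))))
    (htrans : ∀ x y : OnePoint (ZMod p), ∃ g ∈ G, g x = y)
    (hcard : Nat.card G = (p ^ 3 - p) / 2)
    (htransl : ∀ a : ZMod p, ptrans p a ∈ G) :
    negInvPerm p ∈ G := by
  have hp2 : p ≠ 2 := by omega
  have haff := fun g => exists_eq_ptrans_mul_pmul_of_mem hp2 htrans hcard htransl (g := g)
  obtain ⟨w, hwG, hwinf, hw0⟩ := exists_mem_swap_zero_infty htrans htransl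
  obtain ⟨f, hf⟩ := OnePoint.exists_apply_coe_eq_coe hw0
  have hodd (z : ZMod p) (hz : z ≠ 0) : f (-z) = -f z := by
    have hcomm := commute_pmul_neg_one_of_swap hp2 haff
      (pmul_neg_one_mem hp1 htrans hcard htransl) hwG hwinf hw0
    simpa [hf z hz, hf (-z) (neg_ne_zero.mpr hz)] using congr($hcomm.eq z)
  have hfe (a : ZMod p) (ha : a ≠ 0) := exists_slope_of_swap htransl haff hwG hwinf hw0 hf hodd ha
  have hinv {z : ZMod p} (hz : z ≠ 0) : z * f z = f 1 :=
    mul_apply_eq_apply_one hodd (fun a ha => (hfe a ha).imp fun _ ⟨_, _, h⟩ => h) hz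
  obtain ⟨γ, hγ, hγG, hγ1, -⟩ := hfe 1 one_ne_zero
  rw [negInvPerm_eq_pmul_mul hwinf hw0 hf hγ fun z hz => ?_]
  · exact G.mul_mem hγG hwG
  · field_simp
    linear_combination γ * hinv hz + hγ1

theorem negInv_mem_of_one_mod_four
    (p : ℕ) [Fact p.Prime] (hp2 : p ≠ 2) (hp1 : p % 4 = 1)
    (G : Subgroup (Equiv.Perm (OnePoint (ZMod p))))
    (htrans : ∀ x y : OnePoint (ZMod p), ∃ g ∈ G, g x = y)
    (hcard : Nat.card G = (p ^ 3 - p) / 2)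
    (htransl : ∀ a : ZMod p, ptrans p a ∈ G) :
    negInvPerm p ∈ G :=
  negInv_mem_of_one_mod_four_general p hp1 G htrans hcard htransl
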